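/- For all p, n ∈ [0,1] and all a ∈ [0,1], the capacity of the induced binary asymmetric channel M₁ is at most the capacity of the induced binary symmetric channel M₂: h((1−pn) − a(1−p)) − (1−a)·h(pn) − a·h(p(1−n)) ≤ 1 − h((1 − √(1−p))/2). -/

import Mathlib

/-- The binary entropy function in base 2 (with the convention `h(0) = h(1) = 0`,
using `Real.logb 2 0 = 0`). -/
noncomputable def binH (x : ℝ) : ℝ := -(x * Real.logb 2 x) - (1 - x) * Real.logb 2 (1 - x)

/-!
Work in nats and with the probabilities of the output `0`. Then `M₁` is the mixture
`(1 - n) Z + n Z'` of the Z-channel `Z` (input `1` is turned into `0` with probability `p`) and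
its mirror image `Z'`. For a fixed input distribution, mutual information is the average of
relative entropies `D(W(·|x) ‖ output)`, and relative entropy is jointly convex (it is the
perspective of `x log x`), so mutual information is convex in the channel and the left-hand side
is at most the capacity `log (1 + (1 - p) p ^ (p / (1 - p)))` of the Z-channel (Gibbs' inequality).

It remains to compare this function of one variable with
`log 2 - h(q) = ((1 + t) log (1 + t) + (1 - t) log (1 - t)) / 2`, `t = √(1 - p)`. For `p ≤ 1/5`,
expand both sides to second order in `p` and `p log p`. For `p ≥ 1/5`, use that `p log p / (1 - p)`
is decreasing: on `[1/(k+1), 1)` the Z-channel capacity is at most `log (1 + r (1 - p))` whenever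
`(k + 1) r ^ k ≥ 1`. Cubic Taylor bounds on both sides then leave polynomial inequalities on
`[1/5, 1/3]`, `[1/3, 1/2]` and `[1/2, 1)`.
-/

open Real Set

noncomputable section

/-- `u log (u / t)`, written without the division so that it needs no case split at `u = 0`. -/
def relEntr (u t : ℝ) : ℝ := u * log u - u * log t

lemma relEntr_eq_mul_mul_log (u : ℝ) {t : ℝ} (ht : 0 < t) :
    relEntr u t = t * (u / t * log (u / t)) := by
  rcases eq_or_ne u 0 with rfl | hu
  · simp [relEntr]
  rw [relEntr, log_div hu ht.ne']
  field_simp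

lemma sub_le_relEntr {u t : ℝ} (hu : 0 ≤ u) (ht : 0 < t) : u - t ≤ relEntr u t := by
  rw [relEntr_eq_mul_mul_log u ht]
  calc u - t = t * (u / t - 1) := by field_simp
    _ ≤ _ := mul_le_mul_of_nonneg_left (self_sub_one_le_mul_log (by positivity)) ht.le

lemma convexOn_relEntr : ConvexOn ℝ (Ici 0 ×ˢ Ioi 0) fun z : ℝ × ℝ => relEntr z.1 z.2 := by
  refine ⟨(convex_Ici 0).prod (convex_Ioi 0), ?_⟩
  rintro ⟨u₁, t₁⟩ ⟨hu₁, ht₁⟩ ⟨u₂, t₂⟩ ⟨hu₂, ht₂⟩ α β hα hβ hαβ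
  simp only [mem_Ici, mem_Ioi, Prod.smul_mk, Prod.mk_add_mk, smul_eq_mul] at *
  set T := α * t₁ + β * t₂
  have hT : 0 < T := by
    nlinarith [mul_le_mul_of_nonneg_left (min_le_left t₁ t₂) hα,
      mul_le_mul_of_nonneg_left (min_le_right t₁ t₂) hβ, lt_min ht₁ ht₂]
  -- `relEntr` is the perspective `t * φ (u / t)` of `φ x = x log x`
  have key := convexOn_mul_log.2 (mem_Ici.2 (div_nonneg hu₁ ht₁.le))
    (mem_Ici.2 (div_nonneg hu₂ ht₂.le)) (div_nonneg (mul_nonneg hα ht₁.le) hT.le)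
    (div_nonneg (mul_nonneg hβ ht₂.le) hT.le) (by rw [← add_div, div_self hT.ne'])
  have hmix : α * t₁ / T * (u₁ / t₁) + β * t₂ / T * (u₂ / t₂) = (α * u₁ + β * u₂) / T := by
    field_simp
  simp only [smul_eq_mul, hmix] at key
  rw [relEntr_eq_mul_mul_log _ hT, relEntr_eq_mul_mul_log _ ht₁, relEntr_eq_mul_mul_log _ ht₂]
  calc T * ((α * u₁ + β * u₂) / T * log ((α * u₁ + β * u₂) / T))
      ≤ T * (α * t₁ / T * (u₁ / t₁ * log (u₁ / t₁)) + β * t₂ / T * (u₂ / t₂ * log (u₂ / t₂))) :=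
        mul_le_mul_of_nonneg_left key hT.le
    _ = _ := by field_simp

/-- Mutual information (in nats) between an input `X` with `P(X = 1) = a` and the output `Y` of
the binary channel with `P(Y = 0 | X = i) = wᵢ`. -/
def binMutualInfo (a w₀ w₁ : ℝ) : ℝ :=
  binEntropy ((1 - a) * w₀ + a * w₁) - (1 - a) * binEntropy w₀ - a * binEntropy w₁

lemma binMutualInfo_eq_relEntr (a w₀ w₁ : ℝ) :
    binMutualInfo a w₀ w₁ =
      (1 - a) * (relEntr w₀ ((1 - a) * w₀ + a * w₁) +
          relEntr (1 - w₀) (1 - ((1 - a) * w₀ + a * w₁))) +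
        a * (relEntr w₁ ((1 - a) * w₀ + a * w₁) +
          relEntr (1 - w₁) (1 - ((1 - a) * w₀ + a * w₁))) := by
  simp only [binMutualInfo, relEntr, binEntropy_eq_negMulLog_add_negMulLog_one_sub, negMulLog]
  ring

lemma binMutualInfo_swap (a w₀ w₁ : ℝ) : binMutualInfo (1 - a) w₁ w₀ = binMutualInfo a w₀ w₁ := by
  simp only [binMutualInfo]
  ring_nf

lemma binMutualInfo_one_sub (a w₀ w₁ : ℝ) :
    binMutualInfo a (1 - w₀) (1 - w₁) = binMutualInfo a w₀ w₁ := by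
  rw [binMutualInfo, show (1 - a) * (1 - w₀) + a * (1 - w₁) = 1 - ((1 - a) * w₀ + a * w₁) by ring]
  simp only [binEntropy_one_sub, binMutualInfo]

lemma binMutualInfo_mix_le {a l w₀ w₁ v₀ v₁ : ℝ} (ha : a ∈ Icc 0 1) (hl : l ∈ Icc 0 1)
    (hw₀ : w₀ ∈ Icc 0 1) (hw₁ : w₁ ∈ Icc 0 1) (hv₀ : v₀ ∈ Icc 0 1) (hv₁ : v₁ ∈ Icc 0 1)
    (hw : (1 - a) * w₀ + a * w₁ ∈ Ioo 0 1) (hv : (1 - a) * v₀ + a * v₁ ∈ Ioo 0 1) :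
    binMutualInfo a ((1 - l) * w₀ + l * v₀) ((1 - l) * w₁ + l * v₁) ≤
      (1 - l) * binMutualInfo a w₀ w₁ + l * binMutualInfo a v₀ v₁ := by
  obtain ⟨ha₀, ha₁⟩ := ha
  obtain ⟨hl₀, hl₁⟩ := hl
  have mix {u₁ u₂ t₁ t₂ : ℝ} (hu₁ : 0 ≤ u₁) (hu₂ : 0 ≤ u₂) (ht₁ : 0 < t₁) (ht₂ : 0 < t₂) :
      relEntr ((1 - l) * u₁ + l * u₂) ((1 - l) * t₁ + l * t₂) ≤
        (1 - l) * relEntr u₁ t₁ + l * relEntr u₂ t₂ := by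
    simpa using convexOn_relEntr.2 (mk_mem_prod hu₁ ht₁) (mk_mem_prod hu₂ ht₂)
      (sub_nonneg.2 hl₁) hl₀ (by ring)
  set mw := (1 - a) * w₀ + a * w₁
  set mv := (1 - a) * v₀ + a * v₁
  have hm : (1 - a) * ((1 - l) * w₀ + l * v₀) + a * ((1 - l) * w₁ + l * v₁) =
      (1 - l) * mw + l * mv := by ring
  have h₀ := mix hw₀.1 hv₀.1 hw.1 hv.1
  have h₁ := mix hw₁.1 hv₁.1 hw.1 hv.1
  have h₀' := mix (sub_nonneg.2 hw₀.2) (sub_nonneg.2 hv₀.2) (sub_pos.2 hw.2) (sub_pos.2 hv.2)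
  have h₁' := mix (sub_nonneg.2 hw₁.2) (sub_nonneg.2 hv₁.2) (sub_pos.2 hw.2) (sub_pos.2 hv.2)
  rw [binMutualInfo_eq_relEntr, binMutualInfo_eq_relEntr, binMutualInfo_eq_relEntr, hm]
  have e (x y : ℝ) : 1 - ((1 - l) * x + l * y) = (1 - l) * (1 - x) + l * (1 - y) := by ring
  rw [e, e, e]
  linarith [mul_le_mul_of_nonneg_left (add_le_add h₀ h₀') (sub_nonneg.2 ha₁),
    mul_le_mul_of_nonneg_left (add_le_add h₁ h₁') ha₀]

/-- The capacity `log (1 + (1 - p) p ^ (p / (1 - p)))` (in nats) of the Z-channel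
`binMutualInfo · 1 p`, which transmits `0` faithfully and turns `1` into `0` with probability `p`. -/
def zChannelCapacity (p : ℝ) : ℝ := log (1 + (1 - p) * exp (p * log p / (1 - p)))

lemma binMutualInfo_one_le_zChannelCapacity {a p : ℝ} (ha : a ∈ Icc 0 1) (hp₀ : 0 ≤ p)
    (hp₁ : p < 1) : binMutualInfo a 1 p ≤ zChannelCapacity p := by
  set E := (1 - p) * exp (p * log p / (1 - p))
  have hp : 0 < 1 - p := sub_pos.2 hp₁
  have hE : 0 < E := by positivity
  have hξ : 0 ≤ a * (1 - p) := mul_nonneg ha.1 hp.le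
  have hξ' : 0 ≤ 1 - a * (1 - p) := by nlinarith [ha.2]
  -- Gibbs' inequality against the capacity-achieving output distribution `(E, 1) / (1 + E)`
  have gibbs := add_le_add (sub_le_relEntr hξ (by positivity : 0 < E / (1 + E)))
    (sub_le_relEntr hξ' (by positivity : 0 < 1 / (1 + E)))
  have hlogE : log E = log (1 - p) + p * log p / (1 - p) := by
    rw [log_mul hp.ne' (exp_pos _).ne', log_exp]
  rw [relEntr, relEntr, log_div hE.ne' (by positivity), log_div one_ne_zero (by positivity),
    log_one, hlogE] at gibbs
  have hsum : a * (1 - p) - E / (1 + E) + (1 - a * (1 - p) - 1 / (1 + E)) = 0 := by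
    field_simp
    ring
  rw [binMutualInfo, zChannelCapacity, show (1 - a) * 1 + a * p = 1 - a * (1 - p) by ring,
    binEntropy_one_sub, binEntropy_one, binEntropy_eq_negMulLog_add_negMulLog_one_sub,
    binEntropy_eq_negMulLog_add_negMulLog_one_sub]
  simp only [negMulLog]
  have hφ : a * (1 - p) * (p * log p / (1 - p)) = a * p * log p := by field_simp
  linarith

lemma log_one_add_le {y : ℝ} (hy : 0 ≤ y) : log (1 + y) ≤ y - y ^ 2 / 2 + y ^ 3 / 3 := by
  have hz : 0 ≤ y - y ^ 2 / 2 + y ^ 3 / 3 := by nlinarith [mul_nonneg hy (sq_nonneg (y - 3 / 4))]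
  have hexp := sum_le_exp_of_nonneg hz 4
  norm_num [Finset.sum_range_succ, Nat.factorial] at hexp
  rw [log_le_iff_le_exp (by linarith)]
  refine le_trans ?_ hexp
  -- the difference of the two sides is `y ^ 4` times this polynomial
  have hQ : 0 ≤ 5 / 24 + y / 8 - 19 * y ^ 2 / 144 + 7 * y ^ 3 / 72 - y ^ 4 / 36 + y ^ 5 / 162 := by
    nlinarith [mul_nonneg hy (sq_nonneg (y - 1)), mul_nonneg hy (sq_nonneg (y ^ 2 - 3 * y)),
      sq_nonneg (y ^ 2 - 2 * y), mul_nonneg (pow_nonneg hy 3) (sq_nonneg (y - 2)),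
      sq_nonneg (y - 1)]
  nlinarith [mul_nonneg (pow_nonneg hy 4) hQ]

lemma exp_le_quadratic_of_nonpos {v : ℝ} (hv : v ≤ 0) : exp v ≤ 1 + v + v ^ 2 / 2 := by
  have h := quadratic_le_exp_of_nonneg (neg_nonneg.2 hv)
  rw [← inv_inv (exp v), ← exp_neg, inv_le_iff_one_le_mul₀ (exp_pos _)]
  -- `(1 - u + u² / 2)(1 + u + u² / 2) = 1 + u⁴ / 4`
  nlinarith [mul_le_mul_of_nonneg_left h (by nlinarith : (0 : ℝ) ≤ 1 + v + v ^ 2 / 2),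
    pow_nonneg (sq_nonneg v) 2]

lemma mul_log_sq_le {x : ℝ} (hx₀ : 0 < x) (hx₁ : x ≤ 1) : x * log x ^ 2 ≤ 4 * exp (-2) := by
  have hL : 0 ≤ -log x := neg_nonneg.2 (log_nonpos hx₀.le hx₁)
  have h := pow_le_pow_left₀ (by linarith) (add_one_le_exp (-log x / 2 - 1)) 2
  rw [← exp_nat_mul] at h
  calc x * log x ^ 2 = 4 * x * ((-log x / 2 - 1 + 1) ^ 2) := by ring
    _ ≤ 4 * x * exp (2 * (-log x / 2 - 1)) := by gcongr; exact_mod_cast h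
    _ = 4 * exp (-2) := by
      rw [show 2 * (-log x / 2 - 1) = -log x + -2 by ring, exp_add, exp_neg, exp_log hx₀]
      field_simp

lemma binEntropy_le_mul_one_sub_log {x : ℝ} (hx : x ≤ 1) : binEntropy x ≤ x * (1 - log x) := by
  rw [binEntropy_eq_negMulLog_add_negMulLog_one_sub]
  have := negMulLog_le_one_sub_self (sub_nonneg.2 hx)
  simp only [negMulLog] at *
  linarith

lemma mul_log_div_one_sub_le {p₁ p : ℝ} (hp₁ : 0 < p₁) (h : p₁ ≤ p) (hp : p < 1) :
    p * log p / (1 - p) ≤ p₁ * log p₁ / (1 - p₁) := by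
  have hp₀ : 0 < p := hp₁.trans_le h
  -- `p log p / (1 - p)` is the slope of `-log` between `1` and `1 / p`
  have hslope (x : ℝ) (hx₀ : 0 < x) (hx₁ : x < 1) :
      x * log x / (1 - x) = (-log x⁻¹ - -log 1) / (x⁻¹ - 1) := by
    rw [log_inv, log_one]
    field_simp
    ring
  rw [hslope p hp₀ hp, hslope p₁ hp₁ (h.trans_lt hp)]
  exact strictConcaveOn_log_Ioi.concaveOn.neg.secant_mono (mem_Ioi.2 one_pos)
    (mem_Ioi.2 (inv_pos.2 hp₀)) (mem_Ioi.2 (inv_pos.2 hp₁)) (one_lt_inv₀ hp₀ |>.2 hp).ne'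
    (one_lt_inv₀ hp₁ |>.2 (h.trans_lt hp)).ne' (inv_anti₀ hp₁ h)

lemma log_two_sub_binEntropy_one_sub_div_two {t : ℝ} (ht₀ : -1 < t) (ht₁ : t < 1) :
    log 2 - binEntropy ((1 - t) / 2) = ((1 + t) * log (1 + t) + (1 - t) * log (1 - t)) / 2 := by
  rw [binEntropy_eq_negMulLog_add_negMulLog_one_sub, show 1 - (1 - t) / 2 = (1 + t) / 2 by ring]
  simp only [negMulLog]
  rw [log_div (by linarith) two_ne_zero, log_div (by linarith) two_ne_zero]
  ring

lemma sq_add_le_mul_log_add_mul_log {t : ℝ} (ht₀ : 0 ≤ t) (ht₁ : t < 1) :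
    t ^ 2 + t ^ 4 / 6 + t ^ 6 / 15 ≤ (1 + t) * log (1 + t) + (1 - t) * log (1 - t) := by
  have habs : |t| < 1 := abs_lt.2 ⟨by linarith, ht₁⟩
  have habs2 : |t ^ 2| < 1 := by rw [abs_of_nonneg (sq_nonneg t)]; nlinarith
  -- `(1 + t) log (1 + t) + (1 - t) log (1 - t) = ∑ t ^ (2k + 2) / ((2k + 1)(k + 1))`
  have hsum := ((hasSum_log_sub_log_of_abs_lt_one habs).mul_left t).sub
    (hasSum_pow_div_log_of_abs_lt_one habs2)
  have hval : t * (log (1 + t) - log (1 - t)) - -log (1 - t ^ 2) =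
      (1 + t) * log (1 + t) + (1 - t) * log (1 - t) := by
    rw [show 1 - t ^ 2 = (1 - t) * (1 + t) by ring, log_mul (by linarith) (by linarith)]
    ring
  rw [hval] at hsum
  have hterm (k : ℕ) : t * (2 * (1 / (2 * k + 1)) * t ^ (2 * k + 1)) - (t ^ 2) ^ (k + 1) / (k + 1) =
      t ^ (2 * k + 2) / ((2 * k + 1) * (k + 1)) := by
    field_simp
    ring
  have := sum_le_hasSum (Finset.range 3) (fun k _ => by rw [hterm]; positivity) hsum
  norm_num [Finset.sum_range_succ] at this
  linarith

lemma cubic_le_log_two_sub_binEntropy {x : ℝ} (hx₀ : 0 ≤ x) (hx₁ : x < 1) :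
    x / 2 + x ^ 2 / 12 + x ^ 3 / 30 ≤ log 2 - binEntropy ((1 - √x) / 2) := by
  have ht : √x ^ 2 = x := sq_sqrt hx₀
  have ht₁ : √x < 1 := (sqrt_lt' one_pos).2 (by simpa using hx₁)
  rw [log_two_sub_binEntropy_one_sub_div_two (by linarith [sqrt_nonneg x]) ht₁]
  have := sq_add_le_mul_log_add_mul_log (sqrt_nonneg x) ht₁
  rw [show √x ^ 4 = (√x ^ 2) ^ 2 by ring, show √x ^ 6 = (√x ^ 2) ^ 3 by ring, ht] at this
  linarith

lemma binEntropy_one_sub_sqrt_div_two_le {p : ℝ} (hp₀ : 0 < p) (hp : p ≤ 1 / 5) :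
    binEntropy ((1 - √(1 - p)) / 2) ≤ 50 / 189 * p * (1 - log p + 2 * log 2) := by
  set t := √(1 - p)
  set q := (1 - t) / 2
  have ht : t ^ 2 = 1 - p := sq_sqrt (by linarith)
  have ht₀ : 89 / 100 ≤ t := (le_sqrt (by norm_num) (by linarith)).2 (by linarith)
  have ht₁ : t ≤ 1 := sqrt_le_one.mpr (by linarith)
  have hq : 2 * q * (1 + t) = p := by simp only [q]; nlinarith
  have hq₀ : 0 < q := by nlinarith
  have hq₁ : q ≤ 50 / 189 * p := by nlinarith [mul_le_mul_of_nonneg_left ht₀ hq₀.le]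
  have hlogq : -log q ≤ -log p + 2 * log 2 := by
    have := log_le_log hp₀ (show p ≤ 2 ^ 2 * q by nlinarith)
    rw [log_mul (by norm_num) hq₀.ne', log_pow] at this
    push_cast at this
    linarith
  calc binEntropy q ≤ q * (1 - log q) := binEntropy_le_mul_one_sub_log (by linarith)
    _ ≤ q * (1 - log p + 2 * log 2) := by gcongr; linarith
    _ ≤ 50 / 189 * p * (1 - log p + 2 * log 2) := by
      gcongr
      linarith [log_nonpos hp₀.le (by linarith : p ≤ 1), log_nonneg one_le_two]

lemma exp_mul_log_div_one_sub_le (k : ℕ) {r p : ℝ} (hr : 0 < r) (hkr : 1 ≤ (k + 1) * r ^ k)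
    (hkp : 1 / (k + 1) ≤ p) (hp : p < 1) : exp (p * log p / (1 - p)) ≤ r := by
  have hk : (k : ℝ) ≠ 0 := by
    rintro hk
    rw [hk] at hkp
    norm_num at hkp
    linarith
  have hk₁ : (0 : ℝ) < k + 1 := by positivity
  rw [← exp_log hr, exp_le_exp]
  refine (mul_log_div_one_sub_le (by positivity) hkp hp).trans ?_
  have hlog : log ((k + 1)⁻¹) ≤ log (r ^ k) :=
    log_le_log (by positivity) ((inv_le_iff_one_le_mul₀' hk₁).2 hkr)
  rw [log_inv, log_pow] at hlog
  rw [one_div, log_inv, show 1 - (k + 1 : ℝ)⁻¹ = k / (k + 1) by field_simp; ring,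
    div_le_iff₀ (by positivity)]
  field_simp
  linarith

lemma zChannelCapacity_le_cubic (k : ℕ) {r p : ℝ} (hr : 0 < r) (hkr : 1 ≤ (k + 1) * r ^ k)
    (hkp : 1 / (k + 1) ≤ p) (hp : p < 1) :
    zChannelCapacity p ≤ (1 - p) * r - ((1 - p) * r) ^ 2 / 2 + ((1 - p) * r) ^ 3 / 3 := by
  have h1p : 0 < 1 - p := sub_pos.2 hp
  refine le_trans ?_ (log_one_add_le (by positivity))
  exact log_le_log (by positivity) (by gcongr; exact exp_mul_log_div_one_sub_le k hr hkr hkp hp)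

lemma zChannelCapacity_le_of_cubic_le (k : ℕ) {r p : ℝ} (hr : 0 < r) (hkr : 1 ≤ (k + 1) * r ^ k)
    (hkp : 1 / (k + 1) ≤ p) (hp : p < 1)
    (hcubic : (1 - p) * r - ((1 - p) * r) ^ 2 / 2 + ((1 - p) * r) ^ 3 / 3 ≤
      (1 - p) / 2 + (1 - p) ^ 2 / 12 + (1 - p) ^ 3 / 30) :
    zChannelCapacity p ≤ log 2 - binEntropy ((1 - √(1 - p)) / 2) := by
  have hp₀ : 0 < p := lt_of_lt_of_le (by positivity) hkp
  exact (zChannelCapacity_le_cubic k hr hkr hkp hp).trans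
    (hcubic.trans (cubic_le_log_two_sub_binEntropy (by linarith) (by linarith)))

lemma mul_exp_mul_log_div_one_sub_le {p : ℝ} (hp₀ : 0 ≤ p) (hp : p < 1) :
    (1 - p) * exp (p * log p / (1 - p)) ≤ 1 - p + p * log p + (p * log p) ^ 2 / (2 * (1 - p)) := by
  have h1p : 0 < 1 - p := sub_pos.2 hp
  calc (1 - p) * exp (p * log p / (1 - p))
      ≤ (1 - p) * (1 + p * log p / (1 - p) + (p * log p / (1 - p)) ^ 2 / 2) := by
        gcongr
        exact exp_le_quadratic_of_nonpos
          (div_nonpos_of_nonpos_of_nonneg (mul_log_nonpos hp₀ hp.le) h1p.le)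
    _ = 1 - p + p * log p + (p * log p) ^ 2 / (2 * (1 - p)) := by field_simp

lemma zChannelCapacity_le_of_le_one_fifth {p : ℝ} (hp₀ : 0 < p) (hp : p ≤ 1 / 5) :
    zChannelCapacity p ≤ log 2 - binEntropy ((1 - √(1 - p)) / 2) := by
  set E := (1 - p) * exp (p * log p / (1 - p))
  have h1p : 0 < 1 - p := by linarith
  have hlog2 := log_two_lt_d9
  have hlogp : log p ≤ -(2 * log 2) := by
    have := log_le_log hp₀ (show p ≤ (2 ^ 2)⁻¹ by linarith)
    rw [log_inv, log_pow] at this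
    push_cast at this
    linarith
  have hsq : (p * log p) ^ 2 / (2 * (1 - p)) ≤ 0.34375 * p := by
    have h := exp_one_gt_d9
    have h2 : exp (-2) * exp 1 ^ 2 = 1 := by rw [← exp_nat_mul, ← exp_add]; norm_num
    have hpL : p * log p ^ 2 ≤ 0.55 := by nlinarith [mul_log_sq_le hp₀ (by linarith)]
    rw [div_le_iff₀ (by linarith)]
    nlinarith [mul_le_mul_of_nonneg_left hpL hp₀.le]
  have htan : log (1 + E) ≤ log 2 + (E - 1) / 2 := by
    have := log_le_sub_one_of_pos (show 0 < (1 + E) / 2 by positivity)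
    rw [log_div (by positivity) two_ne_zero] at this
    linarith
  have hE := mul_exp_mul_log_div_one_sub_le hp₀.le (by linarith)
  have hH := binEntropy_one_sub_sqrt_div_two_le hp₀ hp
  have h₁ : p * log p ≤ p * -(2 * log 2) := mul_le_mul_of_nonneg_left hlogp hp₀.le
  have h₂ : p * log 2 ≤ p * 0.6931471808 := mul_le_mul_of_nonneg_left hlog2.le hp₀.le
  change log (1 + E) ≤ _
  linarith

theorem zChannelCapacity_le {p : ℝ} (hp₀ : 0 ≤ p) (hp₁ : p ≤ 1) :
    zChannelCapacity p ≤ log 2 - binEntropy ((1 - √(1 - p)) / 2) := by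
  rcases hp₀.eq_or_lt with rfl | hp₀
  · simp [zChannelCapacity, one_add_one_eq_two]
  rcases hp₁.eq_or_lt with rfl | hp₁
  · norm_num [zChannelCapacity, binEntropy_le_log_two]
  have hx : ∀ a b, a ≤ 1 - p → 1 - p ≤ b → 0 ≤ (1 - p - a) * (b - (1 - p)) := fun a b ha hb =>
    mul_nonneg (by linarith) (by linarith)
  rcases le_total p (1 / 5) with h | h
  · exact zChannelCapacity_le_of_le_one_fifth hp₀ h
  rcases le_total p (1 / 3) with h' | h'
  · refine zChannelCapacity_le_of_cubic_le 4 (r := 0.67) (by norm_num) (by norm_num)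
      (by norm_num; linarith) hp₁ ?_
    nlinarith [hx (2 / 3) (4 / 5) (by linarith) (by linarith)]
  rcases le_total p (1 / 2) with h'' | h''
  · refine zChannelCapacity_le_of_cubic_le 2 (r := 0.578) (by norm_num) (by norm_num)
      (by norm_num; linarith) hp₁ ?_
    nlinarith [hx (1 / 2) (2 / 3) (by linarith) (by linarith)]
  · refine zChannelCapacity_le_of_cubic_le 1 (r := 1 / 2) (by norm_num) (by norm_num)
      (by norm_num; linarith) hp₁ ?_
    nlinarith [hx 0 (1 / 2) (by linarith) (by linarith)]

theorem binMutualInfo_asymmetric_le {p n a : ℝ} (hp : p ∈ Icc 0 1) (hn : n ∈ Icc 0 1)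
    (ha : a ∈ Icc 0 1) :
    binMutualInfo a (1 - p * n) (p * (1 - n)) ≤ log 2 - binEntropy ((1 - √(1 - p)) / 2) := by
  obtain ⟨hp₀, hp₁⟩ := hp
  obtain ⟨ha₀, ha₁⟩ := ha
  have hC := zChannelCapacity_le hp₀ hp₁
  have hC₀ : 0 ≤ log 2 - binEntropy ((1 - √(1 - p)) / 2) := sub_nonneg.2 binEntropy_le_log_two
  rcases ha₀.eq_or_lt with rfl | ha₀
  · simpa [binMutualInfo] using hC₀
  rcases ha₁.eq_or_lt with rfl | ha₁
  · simpa [binMutualInfo] using hC₀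
  rcases hp₁.eq_or_lt with rfl | hp₁
  · convert hC₀ using 1
    simp only [binMutualInfo]
    ring_nf
  -- the channel is the mixture `(1 - n) • Z + n • Z'` of two Z-channels with opposite orientations
  have hmix := binMutualInfo_mix_le (w₀ := 1) (w₁ := p) (v₀ := 1 - p) (v₁ := 0) ⟨ha₀.le, ha₁.le⟩ hn
    ⟨zero_le_one, le_rfl⟩ ⟨hp₀, hp₁.le⟩ ⟨by linarith, by linarith⟩ ⟨le_rfl, zero_le_one⟩
    ⟨by nlinarith, by nlinarith⟩ ⟨by nlinarith, by nlinarith⟩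
  have hZ := binMutualInfo_one_le_zChannelCapacity ⟨ha₀.le, ha₁.le⟩ hp₀ hp₁
  have hZ' : binMutualInfo a (1 - p) 0 ≤ zChannelCapacity p := by
    rw [← sub_self 1, binMutualInfo_one_sub, ← binMutualInfo_swap]
    exact binMutualInfo_one_le_zChannelCapacity ⟨by linarith, by linarith⟩ hp₀ hp₁
  rw [show 1 - p * n = (1 - n) * 1 + n * (1 - p) by ring,
    show p * (1 - n) = (1 - n) * p + n * 0 by ring]
  linarith [mul_le_mul_of_nonneg_left (hZ.trans hC) (sub_nonneg.2 hn.2),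
    mul_le_mul_of_nonneg_left (hZ'.trans hC) hn.1]

lemma binH_eq_binEntropy_div_log_two (x : ℝ) : binH x = binEntropy x / log 2 := by
  rw [binH, binEntropy_eq_negMulLog_add_negMulLog_one_sub, logb, logb, negMulLog, negMulLog]
  ring

end

/-- The capacity of the induced binary asymmetric channel `M₁` (with transition matrix
`[[1−pn, p(1−n)], [pn, 1−p(1−n)]]`) is at most the capacity `1 − h((1−√(1−p))/2)` of the
induced binary symmetric channel `M₂`. -/
theorem asymmetric_le_symmetric_capacity (p n a : ℝ) (hp : p ∈ Set.Icc (0 : ℝ) 1)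
    (hn : n ∈ Set.Icc (0 : ℝ) 1) (ha : a ∈ Set.Icc (0 : ℝ) 1) :
    binH ((1 - p * n) - a * (1 - p)) - (1 - a) * binH (p * n) - a * binH (p * (1 - n)) ≤
      1 - binH ((1 - Real.sqrt (1 - p)) / 2) := by
  have h := binMutualInfo_asymmetric_le hp hn ha
  rw [binMutualInfo,
    show (1 - a) * (1 - p * n) + a * (p * (1 - n)) = 1 - p * n - a * (1 - p) by ring,
    ← binEntropy_one_sub (1 - p * n), sub_sub_cancel] at h
  have hl : 0 < log 2 := log_pos one_lt_two
  simp only [binH_eq_binEntropy_div_log_two]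
  rw [← mul_le_mul_iff_of_pos_right hl]
  field_simp
  linarith
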